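/- arXiv:1410.4382 — 5 statements merged into one kernel-verified Lean document; each statement's English description precedes it below -/
import Mathlib

section
/- Let (Ω, 𝒢, (𝒢_k), P) be a filtered probability space and Y_1, Y_2, … an adapted real process such that for each k the conditional distribution function F_k of Y_k given 𝒢_{k-1} is almost surely continuous. Then the random variables U_k = F_k(Y_k), k = 1, 2, …, are i.i.d. with uniform distribution on [0,1]. -/
/-!
Replace each conditional distribution function `F_k` by a regular version `G_k`: a measurable
family of distribution functions (`stieltjesOfMeasurableRat`) equal to `F_k` almost surely.
Testing the defining property of `G_k` against a `𝒢_{k-1}`-measurable random point `Q` gives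
`∫_A G_k(Q) dP = P(A ∩ {Y_k ≤ Q})` for `A ∈ 𝒢_{k-1}`: for countably-valued `Q` by summing over
its values, in general by approximating `Q` from above and using right-continuity. For `Q` the
`u`-quantile of `G_k`, continuity gives `G_k(Q) = u` and `{G_k(Y_k) ≤ u} = {Y_k ≤ Q}`, hence
`P(A ∩ {U_k ≤ u}) = u P(A)`: `U_k` is uniform and independent of `𝒢_{k-1}`, which contains
`U_1, …, U_{k-1}`. Induction on `n` gives the product formula.
-/

open MeasureTheory Filter Set Finset

open ProbabilityTheory Topology

def IsContinuousCDF (g : ℝ → ℝ) : Prop :=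
  Continuous g ∧ Monotone g ∧ Tendsto g atBot (𝓝 0) ∧ Tendsto g atTop (𝓝 1)

namespace IsContinuousCDF

variable {g : ℝ → ℝ}

def toStieltjesFunction (hg : IsContinuousCDF g) : StieltjesFunction ℝ where
  toFun := g
  mono' := hg.2.1
  right_continuous' _ := hg.1.continuousWithinAt

lemma isRatStieltjesPoint {α : Type*} {f : α → ℚ → ℝ} {a : α} (hg : IsContinuousCDF g)
    (hfg : ∀ q : ℚ, f a q = g q) : IsRatStieltjesPoint f a where
  mono q r hqr := by simpa only [hfg] using hg.2.1 (Rat.cast_le.2 hqr)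
  tendsto_atTop_one := by
    rw [funext hfg]
    exact hg.2.2.2.comp (tendsto_ratCast_atTop_iff.2 tendsto_id)
  tendsto_atBot_zero := by
    rw [funext hfg]
    exact hg.2.2.1.comp (tendsto_ratCast_atBot_iff.2 tendsto_id)
  iInf_rat_gt_eq t := by
    simp only [hfg]
    exact ((Equiv.subtypeEquivRight fun r => Rat.cast_lt.symm).iInf_congr fun _ => rfl).trans
      (hg.toStieltjesFunction.iInf_rat_gt_eq t)

end IsContinuousCDF

lemma StieltjesFunction.ext_rat {f g : StieltjesFunction ℝ} (h : ∀ q : ℚ, f q = g q) : f = g :=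
  StieltjesFunction.ext fun x => by
    rw [← f.iInf_rat_gt_eq, ← g.iInf_rat_gt_eq]
    simp only [h]

lemma nonempty_setOf_le_of_tendsto_atBot {g : ℝ → ℝ} {l u : ℝ} (hg : Tendsto g atBot (𝓝 l))
    (hu : l < u) : {x | g x ≤ u}.Nonempty :=
  (hg.eventually_le_const hu).exists

lemma bddAbove_setOf_le_of_tendsto_atTop {g : ℝ → ℝ} {l u : ℝ} (hg : Tendsto g atTop (𝓝 l))
    (hu : u < l) : BddAbove {x | g x ≤ u} := by
  obtain ⟨b, hb⟩ := eventually_atTop.1 (hg.eventually_const_lt hu)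
  exact ⟨b, fun x hx => le_of_not_gt fun hbx => (hb x hbx.le).not_ge hx⟩

lemma lt_sSup_setOf_le_iff {g : ℝ → ℝ} {u t : ℝ} (hg : Monotone g)
    (hne : {x | g x ≤ u}.Nonempty) (hbdd : BddAbove {x | g x ≤ u}) :
    t < sSup {x | g x ≤ u} ↔ ∃ q : ℚ, t < q ∧ g q ≤ u := by
  rw [lt_csSup_iff hbdd hne]
  constructor
  · rintro ⟨x, hx, htx⟩
    obtain ⟨q, htq, hqx⟩ := exists_rat_btwn htx
    exact ⟨q, htq, (hg hqx.le).trans hx⟩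
  · rintro ⟨q, htq, hq⟩
    exact ⟨q, hq, htq⟩

lemma map_sSup_setOf_le {g : ℝ → ℝ} {u : ℝ} (hg : Continuous g)
    (hne : {x | g x ≤ u}.Nonempty) (hbdd : BddAbove {x | g x ≤ u}) :
    g (sSup {x | g x ≤ u}) = u := by
  refine le_antisymm (IsClosed.csSup_mem (isClosed_le hg continuous_const) hne hbdd) ?_
  refine ge_of_tendsto (hg.continuousWithinAt (s := Ioi (sSup {x | g x ≤ u}))).tendsto ?_
  filter_upwards [self_mem_nhdsWithin] with x hx
  exact le_of_lt (not_le.1 fun h => (not_le.2 hx) (le_csSup hbdd h))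

lemma measurable_stieltjesFunction_apply {Ω : Type*} {m : MeasurableSpace Ω}
    {G : Ω → StieltjesFunction ℝ} (hG : ∀ x, Measurable fun ω => G ω x) {Z : Ω → ℝ}
    (hZ : Measurable Z) : Measurable fun ω => G ω (Z ω) := by
  refine measurable_of_Iio fun t => ?_
  -- right-continuity: `G ω (Z ω) < t` is witnessed at a rational point to the right of `Z ω`
  have : (fun ω => G ω (Z ω)) ⁻¹' Iio t = ⋃ q : ℚ, {ω | Z ω < q} ∩ {ω | G ω q < t} := by
    ext ω
    simp only [Set.mem_preimage, Set.mem_Iio, Set.mem_iUnion, Set.mem_inter_iff, Set.mem_ofPred_eq]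
    constructor
    · intro h
      rw [← (G ω).iInf_rat_gt_eq (Z ω)] at h
      have : Nonempty {r : ℚ // Z ω < r} := nonempty_subtype.2 (exists_rat_gt (Z ω))
      obtain ⟨⟨q, hq⟩, hqt⟩ := exists_lt_of_ciInf_lt h
      exact ⟨q, hq, hqt⟩
    · rintro ⟨q, hq, hqt⟩
      exact ((G ω).mono hq.le).trans_lt hqt
  rw [this]
  exact .iUnion fun q => (measurableSet_lt hZ measurable_const).inter
    (measurableSet_lt (hG q) measurable_const)

lemma eventually_le_iff_of_tendsto {ι : Type*} {l : Filter ι} {q : ι → ℝ} {a y : ℝ}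
    (hq : Tendsto q l (𝓝 a)) (hle : ∀ i, a ≤ q i) : ∀ᶠ i in l, y ≤ q i ↔ y ≤ a := by
  rcases le_or_gt y a with hya | hay
  · exact Eventually.of_forall fun i => iff_of_true (hya.trans (hle i)) hya
  · filter_upwards [hq.eventually_lt_const hay] with i hi
    exact iff_of_false hi.not_ge hay.not_ge

section CondCDF

-- `m0` is bound last so that it, not `𝔊`, is the instance found by typeclass search.
variable {Ω : Type*} {𝔊 m0 : MeasurableSpace Ω} {μ : Measure Ω} {Y : Ω → ℝ}

structure IsCondCDF (μ : Measure Ω) (𝔊 : MeasurableSpace Ω) (Y : Ω → ℝ)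
    (G : Ω → StieltjesFunction ℝ) : Prop where
  measurable : ∀ x, Measurable[𝔊] fun ω => G ω x
  tendsto_atBot : ∀ ω, Tendsto (G ω) atBot (𝓝 0)
  tendsto_atTop : ∀ ω, Tendsto (G ω) atTop (𝓝 1)
  ae_eq_condExp : ∀ x,
    (fun ω => G ω x) =ᵐ[μ] μ[{ω | Y ω ≤ x}.indicator (fun _ => (1 : ℝ)) | 𝔊]

def IsCondUniform (μ : Measure Ω) (𝔊 : MeasurableSpace Ω) (U : Ω → ℝ) : Prop :=
  ∀ A, MeasurableSet[𝔊] A → ∀ u ∈ Icc (0 : ℝ) 1,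
    μ (A ∩ {ω | U ω ≤ u}) = ENNReal.ofReal u * μ A

namespace IsCondCDF

variable {G : Ω → StieltjesFunction ℝ} (hG : IsCondCDF μ 𝔊 Y G)
include hG

lemma mem_Icc (ω : Ω) (x : ℝ) : G ω x ∈ Icc (0 : ℝ) 1 :=
  ⟨le_of_tendsto (hG.tendsto_atBot ω) (eventually_atBot.2 ⟨x, fun _ hy => (G ω).mono hy⟩),
    ge_of_tendsto (hG.tendsto_atTop ω) (eventually_atTop.2 ⟨x, fun _ hy => (G ω).mono hy⟩)⟩

lemma norm_le_one (ω : Ω) (x : ℝ) : ‖G ω x‖ ≤ 1 := by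
  rw [Real.norm_of_nonneg (hG.mem_Icc ω x).1]
  exact (hG.mem_Icc ω x).2

lemma measurable_comp {Q : Ω → ℝ} (hQ : Measurable[𝔊] Q) :
    Measurable[𝔊] fun ω => G ω (Q ω) :=
  measurable_stieltjesFunction_apply (m := 𝔊) hG.measurable hQ

lemma integrable_comp [IsFiniteMeasure μ] (hm : 𝔊 ≤ m0) {Q : Ω → ℝ} (hQ : Measurable[𝔊] Q) :
    Integrable (fun ω => G ω (Q ω)) μ :=
  .of_bound ((hG.measurable_comp hQ).mono hm le_rfl).aestronglyMeasurable 1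
    (ae_of_all _ fun ω => hG.norm_le_one ω _)

lemma setIntegral_eq_setIntegral_indicator [IsFiniteMeasure μ] (hm : 𝔊 ≤ m0)
    (hY : Measurable Y) {B : Set Ω} (hB : MeasurableSet[𝔊] B) (x : ℝ) :
    ∫ ω in B, G ω x ∂μ = ∫ ω in B, {ω | Y ω ≤ x}.indicator (fun _ => (1 : ℝ)) ω ∂μ := by
  rw [setIntegral_congr_ae (hm B hB) ((hG.ae_eq_condExp x).mono fun ω h _ => h),
    setIntegral_condExp hm ((integrable_const 1).indicator (hY measurableSet_Iic)) hB]

lemma setIntegral_comp_of_countable_range [IsFiniteMeasure μ] (hm : 𝔊 ≤ m0)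
    (hY : Measurable Y) {Q : Ω → ℝ} (hQ : Measurable[𝔊] Q) (hQc : (range Q).Countable)
    {A : Set Ω} (hA : MeasurableSet[𝔊] A) :
    ∫ ω in A, G ω (Q ω) ∂μ = ∫ ω in A, {ω | Y ω ≤ Q ω}.indicator (fun _ => (1 : ℝ)) ω ∂μ := by
  have := hQc.to_subtype
  set B : range Q → Set Ω := fun r => A ∩ Q ⁻¹' {(r : ℝ)}
  have hB : ∀ r, MeasurableSet[𝔊] (B r) := fun r => hA.inter (hQ (measurableSet_singleton _))
  have hAB : A = ⋃ r, B r := by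
    ext ω
    simp only [B, Set.mem_iUnion, Set.mem_inter_iff, Set.mem_preimage, Set.mem_singleton_iff]
    exact ⟨fun h => ⟨⟨Q ω, mem_range_self ω⟩, h, rfl⟩, fun ⟨_, h, _⟩ => h⟩
  have hdisj : Pairwise (Function.onFun Disjoint B) := fun r s hrs =>
    Set.disjoint_left.2 fun ω hr hs => hrs (Subtype.ext (hr.2.symm.trans hs.2))
  have hind : Integrable ({ω | Y ω ≤ Q ω}.indicator fun _ => (1 : ℝ)) μ :=
    (integrable_const 1).indicator (measurableSet_le hY (hQ.mono hm le_rfl))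
  rw [hAB, integral_iUnion (fun r => hm _ (hB r)) hdisj (hG.integrable_comp hm hQ).integrableOn,
    integral_iUnion (fun r => hm _ (hB r)) hdisj hind.integrableOn]
  refine tsum_congr fun r => ?_
  have hQr : ∀ ω ∈ B r, Q ω = r := fun ω hω => hω.2
  rw [setIntegral_congr_fun (hm _ (hB r)) fun ω hω => by rw [hQr ω hω],
    hG.setIntegral_eq_setIntegral_indicator hm hY (hB r)]
  exact setIntegral_congr_fun (hm _ (hB r)) fun ω hω => by
    simp only [Set.indicator, Set.mem_ofPred_eq, hQr ω hω]

lemma setIntegral_comp [IsFiniteMeasure μ] (hm : 𝔊 ≤ m0) (hY : Measurable Y) {Q : Ω → ℝ}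
    (hQ : Measurable[𝔊] Q) {A : Set Ω} (hA : MeasurableSet[𝔊] A) :
    ∫ ω in A, G ω (Q ω) ∂μ = μ.real (A ∩ {ω | Y ω ≤ Q ω}) := by
  set Qn : ℕ → Ω → ℝ := fun n ω => ⌈((n : ℝ) + 1) * Q ω⌉ / ((n : ℝ) + 1)
  have hQn : ∀ n, Measurable[𝔊] (Qn n) := fun n =>
    ((measurable_of_countable _).comp (Int.measurable_ceil.comp (hQ.const_mul _))).div_const _
  have hQn_range : ∀ n, (range (Qn n)).Countable := fun n =>
    (countable_range fun k : ℤ => (k : ℝ) / ((n : ℝ) + 1)).mono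
      (by rintro _ ⟨ω, rfl⟩; exact ⟨_, rfl⟩)
  have hQ_le : ∀ n ω, Q ω ≤ Qn n ω := fun n ω => by
    rw [le_div_iff₀ (by positivity), mul_comm]
    exact Int.le_ceil _
  have hQn_le : ∀ n ω, Qn n ω ≤ Q ω + 1 / ((n : ℝ) + 1) := fun n ω => by
    rw [div_le_iff₀ (by positivity), add_mul (Q ω), one_div_mul_cancel (by positivity), mul_comm]
    exact (Int.ceil_lt_add_one _).le
  have hlim : ∀ ω, Tendsto (fun n => Qn n ω) atTop (𝓝 (Q ω)) := fun ω => by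
    refine tendsto_of_tendsto_of_tendsto_of_le_of_le tendsto_const_nhds ?_ (hQ_le · ω)
      (hQn_le · ω)
    simpa only [add_zero] using
      tendsto_const_nhds.add (tendsto_one_div_add_atTop_nhds_zero_nat (𝕜 := ℝ))
  have hleft : Tendsto (fun n => ∫ ω in A, G ω (Qn n ω) ∂μ) atTop
      (𝓝 (∫ ω in A, G ω (Q ω) ∂μ)) := by
    refine tendsto_integral_of_dominated_convergence (fun _ => 1)
      (fun n => (hG.integrable_comp hm (hQn n)).aestronglyMeasurable.restrict)
      (integrable_const 1) (fun n => ae_of_all _ fun ω => hG.norm_le_one ω _)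
      (ae_of_all _ fun ω => ?_)
    exact ((G ω).right_continuous (Q ω)).tendsto.comp
      (tendsto_nhdsWithin_iff.2 ⟨hlim ω, Eventually.of_forall (hQ_le · ω)⟩)
  have hS : ∀ Z : Ω → ℝ, Measurable[𝔊] Z → MeasurableSet {ω | Y ω ≤ Z ω} :=
    fun Z hZ => measurableSet_le hY (hZ.mono hm le_rfl)
  have hright : Tendsto
      (fun n => ∫ ω in A, {ω | Y ω ≤ Qn n ω}.indicator (fun _ => (1 : ℝ)) ω ∂μ) atTop
      (𝓝 (∫ ω in A, {ω | Y ω ≤ Q ω}.indicator (fun _ => (1 : ℝ)) ω ∂μ)) := by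
    refine tendsto_integral_of_dominated_convergence (fun _ => 1)
      (fun n => (stronglyMeasurable_const.indicator (hS _ (hQn n))).aestronglyMeasurable)
      (integrable_const 1) (fun n => ae_of_all _ fun ω => ?_) (ae_of_all _ fun ω => ?_)
    · simpa using norm_indicator_le_norm_self (fun _ => (1 : ℝ)) ω
    · refine tendsto_const_nhds.congr' ?_
      filter_upwards [eventually_le_iff_of_tendsto (y := Y ω) (hlim ω) (hQ_le · ω)] with n h
      simp only [Set.indicator, Set.mem_ofPred_eq, h]
  rw [tendsto_nhds_unique hleft (hright.congr fun n =>
      (hG.setIntegral_comp_of_countable_range hm hY (hQn n) (hQn_range n) hA).symm),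
    integral_indicator_const _ (hS Q hQ), measureReal_restrict_apply (hS Q hQ), smul_eq_mul,
    mul_one, Set.inter_comm]

lemma measure_inter_comp_le_of_mem_Ioo [IsFiniteMeasure μ] (hm : 𝔊 ≤ m0) (hY : Measurable Y)
    (hcont : ∀ᵐ ω ∂μ, Continuous (G ω)) {A : Set Ω} (hA : MeasurableSet[𝔊] A) {u : ℝ}
    (hu : u ∈ Ioo (0 : ℝ) 1) :
    μ (A ∩ {ω | G ω (Y ω) ≤ u}) = ENNReal.ofReal u * μ A := by
  have hne : ∀ ω, {x | G ω x ≤ u}.Nonempty := fun ω =>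
    nonempty_setOf_le_of_tendsto_atBot (hG.tendsto_atBot ω) hu.1
  have hbdd : ∀ ω, BddAbove {x | G ω x ≤ u} := fun ω =>
    bddAbove_setOf_le_of_tendsto_atTop (hG.tendsto_atTop ω) hu.2
  set Q : Ω → ℝ := fun ω => sSup {x | G ω x ≤ u}
  have hQ : Measurable[𝔊] Q := by
    refine measurable_of_Ioi fun t => ?_
    have : Q ⁻¹' Ioi t = ⋃ q : ℚ, ⋃ (_ : t < q), {ω | G ω q ≤ u} := by
      ext ω
      simp only [Set.mem_preimage, Set.mem_Ioi, Set.mem_iUnion, Set.mem_ofPred_eq, exists_prop,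
        Q, lt_sSup_setOf_le_iff (G ω).mono (hne ω) (hbdd ω)]
    rw [this]
    exact .iUnion fun q => .iUnion fun _ => measurableSet_le (hG.measurable q) measurable_const
  have hGQ : ∀ᵐ ω ∂μ, G ω (Q ω) = u := hcont.mono fun ω h => map_sSup_setOf_le h (hne ω) (hbdd ω)
  have hGY : (A ∩ {ω | G ω (Y ω) ≤ u} : Set Ω) =ᵐ[μ] (A ∩ {ω | Y ω ≤ Q ω} : Set Ω) := by
    filter_upwards [hGQ] with ω hω
    refine propext (and_congr_right fun _ => ⟨fun h => le_csSup (hbdd ω) h, fun h => ?_⟩)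
    exact ((G ω).mono h).trans hω.le
  rw [measure_congr hGY, ← ofReal_measureReal, ← hG.setIntegral_comp hm hY hQ hA,
    setIntegral_congr_ae (hm A hA) (hGQ.mono fun ω h _ => h), setIntegral_const, smul_eq_mul,
    ENNReal.ofReal_mul measureReal_nonneg, ofReal_measureReal, mul_comm]

lemma isCondUniform_comp [IsFiniteMeasure μ] (hm : 𝔊 ≤ m0) (hY : Measurable Y)
    (hcont : ∀ᵐ ω ∂μ, Continuous (G ω)) : IsCondUniform μ 𝔊 fun ω => G ω (Y ω) := by
  intro A hA u hu
  rcases hu.1.eq_or_lt with rfl | hu0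
  · rw [ENNReal.ofReal_zero, zero_mul]
    refine le_antisymm ?_ zero_le
    have hε : ∀ᶠ ε in 𝓝[>] (0 : ℝ),
        μ (A ∩ {ω | G ω (Y ω) ≤ 0}) ≤ ENNReal.ofReal ε * μ A := by
      filter_upwards [Ioo_mem_nhdsGT zero_lt_one] with ε hε
      rw [← hG.measure_inter_comp_le_of_mem_Ioo hm hY hcont hA hε]
      exact measure_mono (inter_subset_inter_right _ fun ω h => h.trans hε.1.le)
    refine ge_of_tendsto ?_ hε
    simpa using ENNReal.Tendsto.mul_const (ENNReal.tendsto_ofReal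
      (tendsto_nhdsWithin_of_tendsto_nhds (tendsto_id (x := 𝓝 (0 : ℝ)))))
      (Or.inr (measure_ne_top μ A))
  rcases hu.2.eq_or_lt with rfl | hu1
  · rw [ENNReal.ofReal_one, one_mul]
    congr 1
    exact Set.inter_eq_left.2 fun ω _ => (hG.mem_Icc ω _).2
  · exact hG.measure_inter_comp_le_of_mem_Ioo hm hY hcont hA ⟨hu0, hu1⟩

end IsCondCDF

lemma exists_isCondCDF_ae_eq {F : ℝ → Ω → ℝ} (hF : ∀ᵐ ω ∂μ, IsContinuousCDF fun x => F x ω)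
    (hFY : ∀ x, (fun ω => F x ω) =ᵐ[μ]
      μ[{ω | Y ω ≤ x}.indicator (fun _ => (1 : ℝ)) | 𝔊]) :
    ∃ G : Ω → StieltjesFunction ℝ, IsCondCDF μ 𝔊 Y G ∧ ∀ᵐ ω ∂μ, ⇑(G ω) = fun x => F x ω := by
  set f : Ω → ℚ → ℝ := fun ω q => μ[{ω | Y ω ≤ q}.indicator (fun _ => (1 : ℝ)) | 𝔊] ω
  have hf : Measurable[𝔊] f :=
    @measurable_pi_lambda Ω ℚ _ 𝔊 _ f fun _ => stronglyMeasurable_condExp.measurable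
  set G := @stieltjesOfMeasurableRat Ω 𝔊 f hf
  have hGF : ∀ᵐ ω ∂μ, ⇑(G ω) = fun x => F x ω := by
    have hfF : ∀ᵐ ω ∂μ, ∀ q : ℚ, f ω q = F q ω :=
      ae_all_iff.2 fun q => (hFY q).mono fun _ h => h.symm
    filter_upwards [hF, hfF] with ω hω hfω
    refine congrArg (fun g : StieltjesFunction ℝ => ⇑g) (StieltjesFunction.ext_rat (f := G ω)
      (g := hω.toStieltjesFunction) fun q => ?_)
    rw [@stieltjesOfMeasurableRat_eq Ω f 𝔊 hf,
      toRatCDF_of_isRatStieltjesPoint (hω.isRatStieltjesPoint hfω)]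
    exact hfω q
  refine ⟨G, ⟨@measurable_stieltjesOfMeasurableRat Ω f 𝔊 hf,
    @tendsto_stieltjesOfMeasurableRat_atBot Ω f 𝔊 hf,
    @tendsto_stieltjesOfMeasurableRat_atTop Ω f 𝔊 hf,
    fun x => ?_⟩, hGF⟩
  filter_upwards [hGF, hFY x] with ω hω hωx
  rw [← hωx, hω]

end CondCDF

section Sequential

variable {Ω : Type*} {m0 : MeasurableSpace Ω} {𝒢 : ℕ → MeasurableSpace Ω} {U : ℕ → Ω → ℝ}

lemma measurableSet_forall_le (hmono : Monotone 𝒢) (hU : ∀ k, Measurable[𝒢 (k + 1)] (U k))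
    (n : ℕ) (u : Fin n → ℝ) : MeasurableSet[𝒢 n] {ω | ∀ i : Fin n, U i ω ≤ u i} := by
  rw [Set.ofPred_forall]
  exact .iInter fun i => measurableSet_le ((hU i).mono (hmono i.isLt) le_rfl) measurable_const

lemma measure_forall_le_eq_prod {μ : Measure Ω} [IsProbabilityMeasure μ] (hmono : Monotone 𝒢)
    (hU : ∀ k, Measurable[𝒢 (k + 1)] (U k)) (hunif : ∀ k, IsCondUniform μ (𝒢 k) (U k))
    (n : ℕ) (u : Fin n → ℝ) (hu : ∀ i, u i ∈ Icc (0 : ℝ) 1) :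
    μ {ω | ∀ i : Fin n, U i ω ≤ u i} = ENNReal.ofReal (∏ i, u i) := by
  induction n with
  | zero => simp
  | succ n ih =>
    have hsplit : {ω | ∀ i : Fin (n + 1), U i ω ≤ u i}
        = {ω | ∀ i : Fin n, U i ω ≤ u i.castSucc} ∩ {ω | U n ω ≤ u (Fin.last n)} := by
      ext ω
      simp [Fin.forall_fin_succ']
    rw [hsplit, hunif n _ (measurableSet_forall_le hmono hU n _) _ (hu (Fin.last n)),
      ih _ fun i => hu i.castSucc, Fin.prod_univ_castSucc,
      ENNReal.ofReal_mul (Finset.prod_nonneg fun i _ => (hu i.castSucc).1), mul_comm]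

end Sequential

theorem pit_iid_uniform {Ω : Type*} {m0 : MeasurableSpace Ω}
    (μ : Measure Ω) [IsProbabilityMeasure μ]
    (𝒢 : ℕ → MeasurableSpace Ω) (h𝒢 : ∀ k, 𝒢 k ≤ m0) (hmono : Monotone 𝒢)
    (Y : ℕ → Ω → ℝ) (hadapt : ∀ k, 1 ≤ k → Measurable[𝒢 k] (Y k))
    (F : ℕ → ℝ → Ω → ℝ)
    -- for a.e. ω, F k (·, ω) is a continuous distribution function
    (hreg : ∀ k, 1 ≤ k → ∀ᵐ ω ∂μ,
      Continuous (fun x => F k x ω) ∧ Monotone (fun x => F k x ω) ∧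
      Tendsto (fun x => F k x ω) atBot (nhds 0) ∧
      Tendsto (fun x => F k x ω) atTop (nhds 1))
    -- F k x is a version of the conditional probability P(Y_k ≤ x | 𝒢_{k-1})
    (hcond : ∀ k, 1 ≤ k → ∀ x : ℝ,
      (fun ω => F k x ω) =ᵐ[μ]
        μ[({ω | Y k ω ≤ x}).indicator (fun _ => (1:ℝ)) | 𝒢 (k-1)]) :
    ∀ (n : ℕ) (u : Fin n → ℝ), (∀ i, u i ∈ Set.Icc (0:ℝ) 1) →
      μ {ω | ∀ i : Fin n, F (i+1) (Y (i+1) ω) ω ≤ u i} =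
        ENNReal.ofReal (∏ i, u i) := by
  have hY : ∀ k, Measurable[𝒢 (k + 1)] (Y (k + 1)) := fun k => hadapt (k + 1) k.succ_pos
  choose G hG hGF using fun k => exists_isCondCDF_ae_eq (hreg (k + 1) k.succ_pos)
    (by simpa only [Nat.add_sub_cancel] using hcond (k + 1) k.succ_pos)
  have hU : ∀ k, Measurable[𝒢 (k + 1)] fun ω => G k ω (Y (k + 1) ω) := fun k =>
    measurable_stieltjesFunction_apply
      (fun x => ((hG k).measurable x).mono (hmono k.le_succ) le_rfl) (hY k)
  have hunif : ∀ k, IsCondUniform μ (𝒢 k) fun ω => G k ω (Y (k + 1) ω) := fun k =>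
    (hG k).isCondUniform_comp (h𝒢 k) ((hY k).mono (h𝒢 _) le_rfl) <| by
      filter_upwards [hGF k, hreg (k + 1) k.succ_pos] with ω hω hFω
      exact hω ▸ hFω.1
  intro n u hu
  rw [← measure_forall_le_eq_prod hmono hU hunif n u hu]
  refine measure_congr ?_
  filter_upwards [ae_all_iff.2 hGF] with ω hω
  exact propext (forall_congr' fun i => by rw [hω i])
end

section
/- Let F be a distribution function of a random variable Y with E|Y| < ∞, β ∈ (0,1), and let q be any β-quantile of F (i.e., F(x) < β for x < q and F(x) ≥ β for x ≥ q). Define S(x,y) = (1_{x ≥ y} − β)(x − y). Then E[S(q, Y)] ≤ E[S(x, Y)] for every x ∈ ℝ. -/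
open MeasureTheory Set Filter Topology

/-! For fixed `y` the score `x ↦ S x y` is convex, with subgradients at `q` ranging from
`1_{y < q} - β` to `1_{y ≤ q} - β`. Integrating the subgradient inequality against the law of `Y`
gives `E S(x,Y) - E S(q,Y) ≥ (F(q) - β)(x - q)` for `x ≥ q` and `≥ (F(q-) - β)(x - q)` for `x ≤ q`,
and both bounds are nonnegative because `F(q-) ≤ β ≤ F(q)` for a `β`-quantile `q`. -/

noncomputable def quantileScore (β x y : ℝ) : ℝ := ((if x ≥ y then 1 else 0) - β) * (x - y)

lemma sub_mul_le_quantileScore_sub_of_le {β q x : ℝ} (hqx : q ≤ x) (y : ℝ) :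
    ((Iic q).indicator 1 y - β) * (x - q) ≤ quantileScore β x y - quantileScore β q y := by
  unfold quantileScore
  by_cases hy : y ≤ q <;> simp only [indicator, mem_Iic, hy, Pi.one_apply] <;> split_ifs <;> nlinarith

lemma sub_mul_le_quantileScore_sub_of_ge {β q x : ℝ} (hxq : x ≤ q) (y : ℝ) :
    ((Iio q).indicator 1 y - β) * (x - q) ≤ quantileScore β x y - quantileScore β q y := by
  unfold quantileScore
  by_cases hy : y < q <;> simp only [indicator, mem_Iio, hy, Pi.one_apply] <;> split_ifs <;> nlinarith

lemma integrable_quantileScore {ν : Measure ℝ} [IsFiniteMeasure ν] (hν : Integrable id ν)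
    (β x : ℝ) : Integrable (quantileScore β x) ν := by
  have hcoef : Measurable fun y : ℝ ↦ (if x ≥ y then (1 : ℝ) else 0) - β :=
    (Measurable.ite measurableSet_Iic measurable_const measurable_const).sub_const β
  refine ((integrable_const x).sub hν).bdd_mul (c := 1 + |β|) hcoef.aestronglyMeasurable ?_
  filter_upwards with y
  refine (norm_sub_le _ _).trans (add_le_add ?_ (Real.norm_eq_abs β).le)
  split_ifs <;> simp

lemma integral_indicator_one_sub_mul {Ω : Type*} [MeasurableSpace Ω] {μ : Measure Ω}
    [IsProbabilityMeasure μ] {s : Set Ω} (hs : MeasurableSet s) (β c : ℝ) :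
    ∫ ω, (s.indicator 1 ω - β) * c ∂μ = (μ.real s - β) * c := by
  have h1 : Integrable (s.indicator (1 : Ω → ℝ)) μ := (integrable_const 1).indicator hs
  rw [integral_mul_const, integral_sub h1 (integrable_const β),
    integral_indicator_one hs, integral_const, probReal_univ, one_smul]

lemma measureReal_Iio_le_of_forall_lt {ν : Measure ℝ} [IsFiniteMeasure ν] {q β : ℝ}
    (h : ∀ x < q, ν.real (Iic x) < β) : ν.real (Iio q) ≤ β := by
  obtain ⟨u, hu_mono, hu_lt, hu_lim⟩ := exists_seq_strictMono_tendsto q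
  have hlim : Tendsto (fun n ↦ ν.real (Iic (u n))) atTop (𝓝 (ν.real (Iio q))) := by
    rw [← iUnion_Iic_eq_Iio_of_lt_of_tendsto hu_lt hu_lim]
    exact (ENNReal.tendsto_toReal (measure_ne_top _ _)).comp
      (tendsto_measure_iUnion_atTop fun m n hmn ↦ Iic_subset_Iic.2 (hu_mono.monotone hmn))
  exact le_of_tendsto' hlim fun n ↦ (h _ (hu_lt n)).le

theorem integral_quantileScore_le {ν : Measure ℝ} [IsProbabilityMeasure ν]
    (hν : Integrable id ν) {β q : ℝ} (hlt : ν.real (Iio q) ≤ β) (hle : β ≤ ν.real (Iic q))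
    (x : ℝ) : ∫ y, quantileScore β q y ∂ν ≤ ∫ y, quantileScore β x y ∂ν := by
  have hx := integrable_quantileScore hν β x
  have hq := integrable_quantileScore hν β q
  rw [← sub_nonneg, ← integral_sub hx hq]
  rcases le_total q x with hqx | hxq
  · calc 0 ≤ (ν.real (Iic q) - β) * (x - q) := mul_nonneg (sub_nonneg.2 hle) (sub_nonneg.2 hqx)
      _ = ∫ y, ((Iic q).indicator 1 y - β) * (x - q) ∂ν :=
        (integral_indicator_one_sub_mul measurableSet_Iic β (x - q)).symm
      _ ≤ _ := integral_mono
        ((((integrable_const 1).indicator measurableSet_Iic).sub (integrable_const β)).mul_const _)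
        (hx.sub hq) (sub_mul_le_quantileScore_sub_of_le hqx)
  · calc 0 ≤ (ν.real (Iio q) - β) * (x - q) :=
          mul_nonneg_of_nonpos_of_nonpos (sub_nonpos.2 hlt) (sub_nonpos.2 hxq)
      _ = ∫ y, ((Iio q).indicator 1 y - β) * (x - q) ∂ν :=
        (integral_indicator_one_sub_mul measurableSet_Iio β (x - q)).symm
      _ ≤ _ := integral_mono
        ((((integrable_const 1).indicator measurableSet_Iio).sub (integrable_const β)).mul_const _)
        (hx.sub hq) (sub_mul_le_quantileScore_sub_of_ge hxq)

theorem quantile_score_consistent_general {Ω : Type*} [MeasurableSpace Ω]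
    (μ : Measure Ω) [IsProbabilityMeasure μ]
    (Y : Ω → ℝ) (hint : Integrable Y μ)
    (β : ℝ)
    (q : ℝ)
    (hq1 : ∀ x < q, (μ {ω | Y ω ≤ x}).toReal < β)
    (hq2 : ∀ x ≥ q, (μ {ω | Y ω ≤ x}).toReal ≥ β)
    (S : ℝ → ℝ → ℝ)
    (hS : ∀ x y, S x y = ((if x ≥ y then (1:ℝ) else 0) - β) * (x - y)) :
    ∀ x : ℝ, ∫ ω, S q (Y ω) ∂μ ≤ ∫ ω, S x (Y ω) ∂μ := by
  obtain rfl : S = quantileScore β := funext₂ hS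
  have hYm : AEMeasurable Y μ := hint.aemeasurable
  have : IsProbabilityMeasure (μ.map Y) := Measure.isProbabilityMeasure_map hYm
  have hcdf (x : ℝ) : (μ.map Y).real (Iic x) = (μ {ω | Y ω ≤ x}).toReal :=
    map_measureReal_apply_of_aemeasurable hYm measurableSet_Iic
  have hν : Integrable id (μ.map Y) := (integrable_map_measure (by fun_prop) hYm).2 hint
  intro x
  rw [← integral_map hYm (integrable_quantileScore hν β q).aestronglyMeasurable,
    ← integral_map hYm (integrable_quantileScore hν β x).aestronglyMeasurable]
  exact integral_quantileScore_le hν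
    (measureReal_Iio_le_of_forall_lt fun x hx ↦ hcdf x ▸ hq1 x hx) (hcdf q ▸ hq2 q le_rfl) x

theorem quantile_score_consistent {Ω : Type*} [MeasurableSpace Ω]
    (μ : Measure Ω) [IsProbabilityMeasure μ]
    (Y : Ω → ℝ) (hY : Measurable Y) (hint : Integrable Y μ)
    (β : ℝ) (hβ : β ∈ Set.Ioo (0:ℝ) 1)
    (q : ℝ)
    (hq1 : ∀ x < q, (μ {ω | Y ω ≤ x}).toReal < β)
    (hq2 : ∀ x ≥ q, (μ {ω | Y ω ≤ x}).toReal ≥ β)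
    (S : ℝ → ℝ → ℝ)
    (hS : ∀ x y, S x y = ((if x ≥ y then (1:ℝ) else 0) - β) * (x - y)) :
    ∀ x : ℝ, ∫ ω, S q (Y ω) ∂μ ≤ ∫ ω, S x (Y ω) ∂μ :=
  quantile_score_consistent_general μ Y hint β q hq1 hq2 S hS
end

section
/- Let Y be an integrable real random variable with distribution function F, β ∈ (0,1), and define Ψ(x) = x + (1/(1−β)) E[(Y − x)^+]. If F is continuous and strictly increasing, then Ψ attains its minimum over ℝ at the β-quantile q_β, and min_x Ψ(x) = Ψ(q_β) = q_β + (1/(1−β)) E[(Y − q_β)^+]. -/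
/-!
For every `q`, `y ↦ 𝟙{y > q}` is a subgradient of `x ↦ (y - x)⁺` at `q`, so
`(y - x)⁺ ≥ (y - q)⁺ + (q - x) 𝟙{y > q}`. Taking expectations,
`E(Y - x)⁺ ≥ E(Y - q)⁺ + (q - x) P(Y > q)`, and at the `β`-quantile `P(Y > q_β) = 1 - β`,
which turns this into `Ψ x ≥ Ψ q_β`.
-/

open MeasureTheory Set

lemma max_sub_add_ite_le (a q x : ℝ) :
    max (a - q) 0 + (if q < a then q - x else 0) ≤ max (a - x) 0 := by
  split_ifs with h
  · rw [max_eq_left (sub_nonneg.2 h.le)]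
    exact (le_max_left _ _).trans_eq' (by ring)
  · rw [max_eq_right (by linarith), zero_add]
    exact le_max_right _ _

lemma integral_posPart_sub_add_le {Ω : Type*} [MeasurableSpace Ω] {μ : Measure Ω}
    [IsFiniteMeasure μ] {Y : Ω → ℝ} (hY : Integrable Y μ) (q x : ℝ) :
    ∫ ω, max (Y ω - q) 0 ∂μ + (q - x) * μ.real {ω | q < Y ω} ≤ ∫ ω, max (Y ω - x) 0 ∂μ := by
  have hs : NullMeasurableSet {ω | q < Y ω} μ :=
    nullMeasurableSet_lt aemeasurable_const hY.aemeasurable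
  have hind : Integrable ({ω | q < Y ω}.indicator fun _ ↦ q - x) μ :=
    (integrable_const _).indicator₀ hs
  have hint_q : Integrable (fun ω ↦ max (Y ω - q) 0) μ := (hY.sub (integrable_const q)).pos_part
  have hint_x : Integrable (fun ω ↦ max (Y ω - x) 0) μ := (hY.sub (integrable_const x)).pos_part
  calc ∫ ω, max (Y ω - q) 0 ∂μ + (q - x) * μ.real {ω | q < Y ω}
      = ∫ ω, (max (Y ω - q) 0 + {ω | q < Y ω}.indicator (fun _ ↦ q - x) ω) ∂μ := by
        rw [integral_add hint_q hind, integral_indicator₀ hs, setIntegral_const, smul_eq_mul,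
          mul_comm]
    _ ≤ ∫ ω, max (Y ω - x) 0 ∂μ := by
        refine integral_mono (hint_q.add hind) hint_x fun ω ↦ ?_
        simpa only [indicator_apply, mem_ofPred_eq] using max_sub_add_ite_le (Y ω) q x

lemma probReal_lt_eq_one_sub {Ω : Type*} [MeasurableSpace Ω] {μ : Measure Ω}
    [IsProbabilityMeasure μ] {Y : Ω → ℝ} (hY : AEMeasurable Y μ) (q : ℝ) :
    μ.real {ω | q < Y ω} = 1 - μ.real {ω | Y ω ≤ q} := by
  rw [← probReal_compl_eq_one_sub₀ (nullMeasurableSet_le hY aemeasurable_const)]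
  simp only [compl_ofPred, not_le]

theorem rockafellar_uryasev_min_general {Ω : Type*} [MeasurableSpace Ω]
    (μ : Measure Ω) [IsProbabilityMeasure μ]
    (Y : Ω → ℝ) (hint : Integrable Y μ)
    (β : ℝ) (hβ : β ∈ Set.Ioo (0:ℝ) 1)
    (F : ℝ → ℝ) (hF : ∀ y, F y = (μ {ω | Y ω ≤ y}).toReal)
    (qβ : ℝ) (hqβ : F qβ = β)
    (Ψ : ℝ → ℝ)
    (hΨ : ∀ x, Ψ x = x + (1/(1-β)) * ∫ ω, max (Y ω - x) 0 ∂μ) :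
    (∀ x : ℝ, Ψ qβ ≤ Ψ x) ∧
    Ψ qβ = qβ + (1/(1-β)) * ∫ ω, max (Y ω - qβ) 0 ∂μ := by
  refine ⟨fun x ↦ ?_, hΨ qβ⟩
  have hβ1 : 0 < 1 - β := sub_pos.2 hβ.2
  have htail : μ.real {ω | qβ < Y ω} = 1 - β := by
    rw [probReal_lt_eq_one_sub hint.aemeasurable, measureReal_def, ← hF, hqβ]
  have key := integral_posPart_sub_add_le hint qβ x
  rw [htail] at key
  have hc : 1 / (1 - β) * (1 - β) = 1 := one_div_mul_cancel hβ1.ne'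
  rw [hΨ, hΨ]
  have hscaled := mul_le_mul_of_nonneg_left key (one_div_pos.2 hβ1).le
  rw [mul_add, mul_left_comm, hc, mul_one] at hscaled
  linarith

theorem rockafellar_uryasev_min {Ω : Type*} [MeasurableSpace Ω]
    (μ : Measure Ω) [IsProbabilityMeasure μ]
    (Y : Ω → ℝ) (hY : Measurable Y) (hint : Integrable Y μ)
    (β : ℝ) (hβ : β ∈ Set.Ioo (0:ℝ) 1)
    (F : ℝ → ℝ) (hF : ∀ y, F y = (μ {ω | Y ω ≤ y}).toReal)
    (hFc : Continuous F) (hFs : StrictMono F)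
    (qβ : ℝ) (hqβ : F qβ = β)
    (Ψ : ℝ → ℝ)
    (hΨ : ∀ x, Ψ x = x + (1/(1-β)) * ∫ ω, max (Y ω - x) 0 ∂μ) :
    (∀ x : ℝ, Ψ qβ ≤ Ψ x) ∧
    Ψ qβ = qβ + (1/(1-β)) * ∫ ω, max (Y ω - qβ) 0 ∂μ :=
  rockafellar_uryasev_min_general μ Y hint β hβ F hF qβ hqβ Ψ hΨ
end

section
/- Let S_n = Σ_{k=1}^n X_k be a square-integrable martingale with S_0 = 0, and define ⟨S⟩_n = Σ_{k=1}^n E[X_k² | 𝒢_{k-1}]. Then the martingale W_n = Σ_{k=1}^n X_k/(1 + ⟨S⟩_k) satisfies E[(W_n − W_{n−1})² | 𝒢_{n−1}] ≤ 1/(1+⟨S⟩_{n−1}) − 1/(1+⟨S⟩_n) almost surely, and hence ⟨W⟩_∞ ≤ 1. -/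
/-!
Write `V = ⟨S⟩_n - ⟨S⟩_{n-1} = E[X_n² | 𝒢_{n-1}]`. Since `⟨S⟩` is predictable, the factor
`(1 + ⟨S⟩_n)⁻²` is `𝒢_{n-1}`-measurable and pulls out of the conditional expectation, so
`E[(X_n / (1 + ⟨S⟩_n))² | 𝒢_{n-1}] = V / (1 + ⟨S⟩_{n-1} + V)²`, which is at most
`1 / (1 + ⟨S⟩_{n-1}) - 1 / (1 + ⟨S⟩_n)`. Summing, the bracket of `W` telescopes to
`1 - 1 / (1 + ⟨S⟩_n) ≤ 1`.
-/

open MeasureTheory Filter Finset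

lemma div_one_add_add_sq_le_one_div_sub_one_div {a d : ℝ} (ha : 0 ≤ a) (hd : 0 ≤ d) :
    d / (1 + (a + d)) ^ 2 ≤ 1 / (1 + a) - 1 / (1 + (a + d)) := by
  have hsub : 1 / (1 + a) - 1 / (1 + (a + d)) = d / ((1 + a) * (1 + (a + d))) := by
    field_simp
    ring
  rw [hsub]
  apply div_le_div_of_nonneg_left hd (by positivity)
  nlinarith

lemma sum_Icc_le_sub_of_le_sub {u w : ℕ → ℝ} (h : ∀ k, u (k + 1) ≤ w k - w (k + 1)) (n : ℕ) :
    ∑ k ∈ Icc 1 n, u k ≤ w 0 - w n := by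
  induction n with
  | zero => simp
  | succ n ih =>
    rw [sum_Icc_succ_top (by omega)]
    linarith [h n]

section CondExp

variable {Ω : Type*} {m m0 : MeasurableSpace Ω} {μ : Measure Ω} {Y a b : Ω → ℝ}

lemma condExp_sq_div_one_add_ae_eq (hm : m ≤ m0) (hY : MemLp Y 2 μ)
    (hb : AEStronglyMeasurable[m] b μ) (hb0 : 0 ≤ᵐ[μ] b) :
    μ[fun ω => (Y ω / (1 + b ω)) ^ 2 | m] =ᵐ[μ]
      fun ω => μ[fun ω => Y ω ^ 2 | m] ω / (1 + b ω) ^ 2 := by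
  set f : Ω → ℝ := fun ω => ((1 + b ω) ^ 2)⁻¹
  have hf : AEStronglyMeasurable[m] f μ := by fun_prop
  have hf_le : ∀ᵐ ω ∂μ, ‖f ω‖ ≤ 1 := by
    filter_upwards [hb0] with ω (hω : 0 ≤ b ω)
    rw [Real.norm_of_nonneg (by positivity)]
    exact inv_le_one_of_one_le₀ (one_le_pow₀ (by linarith))
  have hfY : Integrable (f * fun ω => Y ω ^ 2) μ :=
    hY.integrable_sq.bdd_mul (hf.mono hm) hf_le
  have hsplit : (fun ω => (Y ω / (1 + b ω)) ^ 2) = f * fun ω => Y ω ^ 2 := by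
    ext ω
    rw [Pi.mul_apply, div_pow, div_eq_inv_mul]
  rw [hsplit]
  filter_upwards [condExp_mul_of_aestronglyMeasurable_left hf hfY hY.integrable_sq] with ω hω
  rw [hω, Pi.mul_apply, div_eq_inv_mul]

theorem condExp_sq_div_one_add_le (hm : m ≤ m0) (hY : MemLp Y 2 μ)
    (hb : AEStronglyMeasurable[m] b μ) (ha : 0 ≤ᵐ[μ] a)
    (hab : b =ᵐ[μ] a + μ[fun ω => Y ω ^ 2 | m]) :
    μ[fun ω => (Y ω / (1 + b ω)) ^ 2 | m] ≤ᵐ[μ] fun ω => 1 / (1 + a ω) - 1 / (1 + b ω) := by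
  have hV : 0 ≤ᵐ[μ] μ[fun ω => Y ω ^ 2 | m] :=
    condExp_nonneg (ae_of_all _ fun ω => sq_nonneg (Y ω))
  have hb0 : 0 ≤ᵐ[μ] b := by
    filter_upwards [ha, hV, hab] with ω ha hV hab
    simp only [hab, Pi.add_apply, Pi.zero_apply] at ha hV ⊢
    positivity
  filter_upwards [condExp_sq_div_one_add_ae_eq hm hY hb hb0, ha, hV, hab] with ω hpull ha hV hab
  rw [hpull, hab]
  exact div_one_add_add_sq_le_one_div_sub_one_div ha hV

end CondExp

section AngleBracket

variable {Ω : Type*} {m0 : MeasurableSpace Ω} (μ : Measure Ω) (𝒢 : Filtration ℕ m0)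
  (X : ℕ → Ω → ℝ)

/-- The predictable quadratic variation `⟨S⟩` of `S_n = ∑_{k=1}^n X_k`. -/
noncomputable def angleBracket (n : ℕ) : Ω → ℝ :=
  fun ω => ∑ k ∈ Icc 1 n, (μ[fun ω' => (X k ω') ^ 2 | 𝒢 (k - 1)]) ω

@[simp]
lemma angleBracket_zero : angleBracket μ 𝒢 X 0 = 0 := by
  ext ω
  simp [angleBracket]

lemma angleBracket_succ (n : ℕ) :
    angleBracket μ 𝒢 X (n + 1) = angleBracket μ 𝒢 X n + μ[fun ω => X (n + 1) ω ^ 2 | 𝒢 n] := by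
  ext ω
  simp only [angleBracket, sum_Icc_succ_top (Nat.le_add_left 1 n), Pi.add_apply,
    Nat.add_sub_cancel]

lemma angleBracket_nonneg (n : ℕ) : 0 ≤ᵐ[μ] angleBracket μ 𝒢 X n := by
  have hV : ∀ᵐ ω ∂μ, ∀ k, 0 ≤ (μ[fun ω' => (X k ω') ^ 2 | 𝒢 (k - 1)]) ω :=
    ae_all_iff.2 fun k => condExp_nonneg (ae_of_all _ fun ω => sq_nonneg (X k ω))
  filter_upwards [hV] with ω hω
  exact sum_nonneg fun k _ => hω k

lemma stronglyMeasurable_angleBracket_succ (n : ℕ) :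
    StronglyMeasurable[𝒢 n] (angleBracket μ 𝒢 X (n + 1)) :=
  Finset.stronglyMeasurable_fun_sum _ fun k hk =>
    stronglyMeasurable_condExp.mono (𝒢.mono (by simp only [mem_Icc] at hk; omega))

end AngleBracket

theorem martingale_transform_bracket_bound_general {Ω : Type*} {m0 : MeasurableSpace Ω}
    (μ : Measure Ω)
    (𝒢 : Filtration ℕ m0)
    (X : ℕ → Ω → ℝ)
    (hL2 : ∀ k, MemLp (X k) 2 μ)
    (A : ℕ → Ω → ℝ)
    (hA : ∀ n, A n =ᵐ[μ] fun ω =>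
      ∑ k ∈ Finset.Icc 1 n, (μ[fun ω' => (X k ω')^2 | 𝒢 (k-1)]) ω) :
    (∀ n, 1 ≤ n →
      (μ[fun ω => (X n ω / (1 + A n ω))^2 | 𝒢 (n-1)]) ≤ᵐ[μ]
        fun ω => 1/(1 + A (n-1) ω) - 1/(1 + A n ω)) ∧
    (∀ n, (fun ω => ∑ k ∈ Finset.Icc 1 n,
        (μ[fun ω' => (X k ω' / (1 + A k ω'))^2 | 𝒢 (k-1)]) ω) ≤ᵐ[μ]
      fun _ => (1:ℝ)) := by
  have hA' : ∀ n, A n =ᵐ[μ] angleBracket μ 𝒢 X n := hA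
  have step : ∀ n, (μ[fun ω => (X (n + 1) ω / (1 + A (n + 1) ω)) ^ 2 | 𝒢 n]) ≤ᵐ[μ]
      fun ω => 1 / (1 + A n ω) - 1 / (1 + A (n + 1) ω) := fun n =>
    condExp_sq_div_one_add_le (𝒢.le n) (hL2 (n + 1))
      ((stronglyMeasurable_angleBracket_succ μ 𝒢 X n).aestronglyMeasurable.congr (hA' _).symm)
      ((angleBracket_nonneg μ 𝒢 X n).trans_eq (hA' n).symm)
      ((hA' _).trans (by rw [angleBracket_succ]; exact (hA' n).symm.add EventuallyEq.rfl))
  refine ⟨fun n hn => ?_, fun n => ?_⟩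
  · obtain ⟨n, rfl⟩ := Nat.exists_eq_add_of_le' hn
    simpa using step n
  · filter_upwards [ae_all_iff.2 step, hA' 0, hA' n, angleBracket_nonneg μ 𝒢 X n]
      with ω hstep h0 hAn hnonneg
    have htel := sum_Icc_le_sub_of_le_sub
      (u := fun k => μ[fun ω' => (X k ω' / (1 + A k ω')) ^ 2 | 𝒢 (k - 1)] ω)
      (w := fun k => 1 / (1 + A k ω)) (fun k => by simpa using hstep k) n
    simp only [h0, angleBracket_zero, Pi.zero_apply, add_zero, div_one] at htel
    have : 0 ≤ 1 / (1 + A n ω) := by simp only [hAn, Pi.zero_apply] at hnonneg ⊢; positivity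
    linarith

theorem martingale_transform_bracket_bound {Ω : Type*} {m0 : MeasurableSpace Ω}
    (μ : Measure Ω) [IsProbabilityMeasure μ]
    (𝒢 : Filtration ℕ m0)
    (X : ℕ → Ω → ℝ)
    (hadapt : ∀ k, StronglyMeasurable[𝒢 k] (X k))
    (hL2 : ∀ k, MemLp (X k) 2 μ)
    (hmdiff : ∀ k, 1 ≤ k → μ[X k | 𝒢 (k-1)] =ᵐ[μ] 0)
    (A : ℕ → Ω → ℝ)
    (hA : ∀ n, A n =ᵐ[μ] fun ω =>
      ∑ k ∈ Finset.Icc 1 n, (μ[fun ω' => (X k ω')^2 | 𝒢 (k-1)]) ω) :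
    (∀ n, 1 ≤ n →
      (μ[fun ω => (X n ω / (1 + A n ω))^2 | 𝒢 (n-1)]) ≤ᵐ[μ]
        fun ω => 1/(1 + A (n-1) ω) - 1/(1 + A n ω)) ∧
    (∀ n, (fun ω => ∑ k ∈ Finset.Icc 1 n,
        (μ[fun ω' => (X k ω' / (1 + A k ω'))^2 | 𝒢 (k-1)]) ω) ≤ᵐ[μ]
      fun _ => (1:ℝ)) :=
  martingale_transform_bracket_bound_general μ 𝒢 X hL2 A hA
end

section
/- (Martingale strong law) Let S_n be a square-integrable martingale with S_0 = 0 and predictable quadratic variation ⟨S⟩_n = Σ_{k≤n} E[(S_k − S_{k−1})² | 𝒢_{k−1}]. Then S_n/⟨S⟩_n → 0 almost surely on the event {⟨S⟩_∞ = ∞}. -/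
open MeasureTheory Filter Finset Topology Asymptotics

/-!
Weighting the increments of `S` by the predictable factor `1 / (1 + ⟨S⟩_{k+1}) ∈ (0, 1]` gives a
martingale `Mₙ = ∑_{k<n} (S_{k+1} - S_k) / (1 + ⟨S⟩_{k+1})` with orthogonal increments, and
`E[(M_{n+1} - Mₙ)²] = E[(⟨S⟩_{n+1} - ⟨S⟩ₙ) / (1 + ⟨S⟩_{n+1})²]
  ≤ E[1 / (1 + ⟨S⟩ₙ) - 1 / (1 + ⟨S⟩_{n+1})]`,
so `E[Mₙ²] ≤ 1` by telescoping. Being bounded in `L¹`, `M` converges almost surely, and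
Kronecker's lemma turns this into `Sₙ / (1 + ⟨S⟩ₙ) → 0` wherever `⟨S⟩ₙ → ∞`.
-/

theorem sum_range_mul_sub_eq (b T : ℕ → ℝ) (n : ℕ) :
    ∑ k ∈ range n, b (k + 1) * (T (k + 1) - T k) =
      b n * T n - b 0 * T 0 - ∑ k ∈ range n, (b (k + 1) - b k) * T k := by
  induction n with
  | zero => simp
  | succ n ih =>
    rw [sum_range_succ, ih, sum_range_succ]
    ring

theorem tendsto_sum_range_sub_mul_div_zero {b R : ℕ → ℝ} (hmono : Monotone b)
    (htop : Tendsto b atTop atTop) (hR : Tendsto R atTop (𝓝 0)) :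
    Tendsto (fun n => (∑ k ∈ range n, (b (k + 1) - b k) * R k) / b n) atTop (𝓝 0) := by
  have hw : 0 ≤ fun k => b (k + 1) - b k := fun k => sub_nonneg.2 (hmono k.le_succ)
  have hsum_w : (fun n => ∑ k ∈ range n, (b (k + 1) - b k)) = fun n => b n - b 0 :=
    funext (sum_range_sub b)
  have hsmall : (fun n => ∑ k ∈ range n, (b (k + 1) - b k) * R k) =o[atTop]
      fun n => ∑ k ∈ range n, (b (k + 1) - b k) := by
    refine IsLittleO.sum_range ?_ hw ?_
    · simpa [mul_comm] using (isLittleO_one_iff ℝ).2 hR |>.mul_isBigO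
        (isBigO_refl (fun k => b (k + 1) - b k) atTop)
    · rw [hsum_w]; exact tendsto_atTop_add_const_right _ _ htop
  have hbig : (fun n => b n - b 0) =O[atTop] b :=
    (isBigO_refl b atTop).sub
      (isLittleO_const_left.2 (Or.inr (tendsto_norm_atTop_atTop.comp htop))).isBigO
  rw [hsum_w] at hsmall
  exact (hsmall.trans_isBigO hbig).tendsto_div_nhds_zero

-- Kronecker's lemma
theorem tendsto_sum_range_div_zero_of_tendsto_sum_range_div {b x : ℕ → ℝ} (hb : ∀ n, 0 < b n)
    (hmono : Monotone b) (htop : Tendsto b atTop atTop) {c : ℝ}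
    (hc : Tendsto (fun n => ∑ k ∈ range n, x k / b (k + 1)) atTop (𝓝 c)) :
    Tendsto (fun n => (∑ k ∈ range n, x k) / b n) atTop (𝓝 0) := by
  set R : ℕ → ℝ := fun n => ∑ k ∈ range n, x k / b (k + 1) - c
  have hR : Tendsto R atTop (𝓝 0) := by simpa using hc.sub_const c
  have hx : ∀ k, x k = b (k + 1) * (R (k + 1) - R k) := fun k => by
    simp only [R, sum_range_succ]
    field_simp [(hb (k + 1)).ne']
    ring
  have hsum : ∀ n, (∑ k ∈ range n, x k) / b n =
      R n - b 0 * R 0 / b n - (∑ k ∈ range n, (b (k + 1) - b k) * R k) / b n := fun n => by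
    rw [sum_congr rfl fun k _ => hx k, sum_range_mul_sub_eq]
    field_simp [(hb n).ne']
  simp_rw [hsum]
  simpa using (hR.sub (tendsto_const_nhds.div_atTop htop)).sub
    (tendsto_sum_range_sub_mul_div_zero hmono htop hR)

theorem tendsto_div_of_tendsto_sum_inv_one_add_mul_sub {s c : ℕ → ℝ} (hc : ∀ n, 0 ≤ c n)
    (hmono : Monotone c) (htop : Tendsto c atTop atTop) (hs0 : s 0 = 0) {L : ℝ}
    (hL : Tendsto (fun n => ∑ k ∈ range n, (1 + c (k + 1))⁻¹ * (s (k + 1) - s k)) atTop (𝓝 L)) :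
    Tendsto (fun n => s n / c n) atTop (𝓝 0) := by
  have htop' : Tendsto (fun n => 1 + c n) atTop atTop := tendsto_atTop_add_const_left _ 1 htop
  have hs : Tendsto (fun n => s n / (1 + c n)) atTop (𝓝 0) := by
    have hkronecker := tendsto_sum_range_div_zero_of_tendsto_sum_range_div
      (x := fun k => s (k + 1) - s k) (fun n => add_pos_of_pos_of_nonneg one_pos (hc n))
      (monotone_const.add hmono) htop' (by simpa only [div_eq_inv_mul] using hL)
    simpa [sum_range_sub (f := s), hs0] using hkronecker
  have hratio : Tendsto (fun n => (1 + c n) / c n) atTop (𝓝 1) := by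
    have hinv : Tendsto (fun n => 1 / c n + 1) atTop (𝓝 (0 + 1)) :=
      (tendsto_const_nhds.div_atTop htop).add_const 1
    rw [zero_add] at hinv
    refine hinv.congr' ?_
    filter_upwards [htop.eventually_gt_atTop 0] with n hn
    field_simp
  simpa using (hs.mul hratio).congr' <| by
    filter_upwards [htop.eventually_gt_atTop 0] with n hn
    field_simp

theorem inv_sq_mul_le_inv_sub_inv {a v : ℝ} (ha : 0 < a) (hv : 0 ≤ v) :
    (a + v)⁻¹ ^ 2 * v ≤ a⁻¹ - (a + v)⁻¹ := by
  have hav : 0 < a + v := by linarith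
  rw [inv_sub_inv ha.ne' hav.ne', inv_pow, ← div_eq_inv_mul, add_sub_cancel_left,
    div_le_div_iff₀ (by positivity) (by positivity)]
  nlinarith [mul_nonneg hv (mul_nonneg hv hav.le)]

section

variable {Ω : Type*} {m m0 : MeasurableSpace Ω} {μ : Measure Ω}

theorem integral_mul_eq_integral_mul_condExp {f g : Ω → ℝ} (hm : m ≤ m0)
    [SigmaFinite (μ.trim hm)] (hf : StronglyMeasurable[m] f) (hfg : Integrable (f * g) μ)
    (hg : Integrable g μ) :
    ∫ ω, f ω * g ω ∂μ = ∫ ω, f ω * μ[g | m] ω ∂μ := by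
  rw [← integral_condExp hm]
  exact integral_congr_ae (condExp_mul_of_stronglyMeasurable_left hf hfg hg)

theorem MeasureTheory.Martingale.integral_sq_succ [IsFiniteMeasure μ] {𝒢 : Filtration ℕ m0}
    {f : ℕ → Ω → ℝ} (hf : Martingale f 𝒢 μ) (hL2 : ∀ n, MemLp (f n) 2 μ) (n : ℕ) :
    ∫ ω, f (n + 1) ω ^ 2 ∂μ = ∫ ω, f n ω ^ 2 ∂μ + ∫ ω, (f (n + 1) ω - f n ω) ^ 2 ∂μ := by
  have hcross : ∫ ω, f n ω * f (n + 1) ω ∂μ = ∫ ω, f n ω ^ 2 ∂μ := by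
    rw [integral_mul_eq_integral_mul_condExp (𝒢.le n) (hf.stronglyAdapted n)
      ((hL2 n).integrable_mul (hL2 (n + 1))) (hf.integrable _)]
    refine integral_congr_ae ?_
    filter_upwards [hf.condExp_ae_eq n.le_succ] with ω hω
    rw [hω, sq]
  have hexpand : ∀ ω, (f (n + 1) ω - f n ω) ^ 2 =
      f (n + 1) ω ^ 2 - 2 * (f n ω * f (n + 1) ω) + f n ω ^ 2 := fun ω => by ring
  have hprod : Integrable (fun ω => f n ω * f (n + 1) ω) μ :=
    (hL2 n).integrable_mul (hL2 (n + 1))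
  have hdiff : Integrable (fun ω => f (n + 1) ω ^ 2 - 2 * (f n ω * f (n + 1) ω)) μ :=
    (hL2 _).integrable_sq.sub (hprod.const_mul 2)
  simp_rw [hexpand]
  rw [integral_add hdiff (hL2 n).integrable_sq,
    integral_sub (hL2 _).integrable_sq (hprod.const_mul 2), integral_const_mul, hcross]
  ring

theorem eLpNorm_one_le_one_add_integral_sq [IsProbabilityMeasure μ] {f : Ω → ℝ}
    (hf : MemLp f 2 μ) : eLpNorm f 1 μ ≤ ENNReal.ofReal (1 + ∫ ω, f ω ^ 2 ∂μ) := by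
  rw [eLpNorm_one_eq_lintegral_enorm, ← ofReal_integral_norm_eq_lintegral_enorm
    (hf.integrable one_le_two)]
  refine ENNReal.ofReal_le_ofReal ?_
  calc ∫ ω, ‖f ω‖ ∂μ ≤ ∫ ω, (1 + f ω ^ 2) ∂μ :=
        integral_mono (hf.integrable one_le_two).norm
          ((integrable_const 1).add hf.integrable_sq) fun ω => by
            nlinarith [sq_nonneg (‖f ω‖ - 1), norm_nonneg (f ω), Real.norm_eq_abs (f ω),
              sq_abs (f ω)]
    _ = 1 + ∫ ω, f ω ^ 2 ∂μ := by
        rw [integral_add (integrable_const 1) hf.integrable_sq]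
        simp

end

/-- `⟨S⟩ₙ`, with each conditional variance truncated at `0` so that it is nonnegative
everywhere and not only almost everywhere. -/
noncomputable def predictableQuadVar {Ω : Type*} {m0 : MeasurableSpace Ω} (μ : Measure Ω)
    (𝒢 : Filtration ℕ m0) (S : ℕ → Ω → ℝ) (n : ℕ) (ω : Ω) : ℝ :=
  ∑ k ∈ range n, max (μ[fun ω' => (S (k + 1) ω' - S k ω') ^ 2 | 𝒢 k] ω) 0

noncomputable def normalizedMartingale {Ω : Type*} {m0 : MeasurableSpace Ω} (μ : Measure Ω)
    (𝒢 : Filtration ℕ m0) (S : ℕ → Ω → ℝ) (n : ℕ) : Ω → ℝ :=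
  ∑ k ∈ range n, (fun ω => (1 + predictableQuadVar μ 𝒢 S (k + 1) ω)⁻¹) * (S (k + 1) - S k)

section

variable {Ω : Type*} {m0 : MeasurableSpace Ω} {μ : Measure Ω} {𝒢 : Filtration ℕ m0}
  {S : ℕ → Ω → ℝ}

theorem predictableQuadVar_succ (n : ℕ) (ω : Ω) :
    predictableQuadVar μ 𝒢 S (n + 1) ω = predictableQuadVar μ 𝒢 S n ω +
      max (μ[fun ω' => (S (n + 1) ω' - S n ω') ^ 2 | 𝒢 n] ω) 0 :=
  sum_range_succ _ _

theorem predictableQuadVar_nonneg (n : ℕ) (ω : Ω) : 0 ≤ predictableQuadVar μ 𝒢 S n ω :=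
  sum_nonneg fun _ _ => le_max_right _ _

theorem monotone_predictableQuadVar (ω : Ω) : Monotone fun n => predictableQuadVar μ 𝒢 S n ω :=
  monotone_nat_of_le_succ fun n => by
    rw [predictableQuadVar_succ]
    exact le_add_of_nonneg_right (le_max_right _ _)

theorem measurable_predictableQuadVar {n j : ℕ} (hnj : n ≤ j + 1) :
    Measurable[𝒢 j] (predictableQuadVar μ 𝒢 S n) :=
  measurable_fun_sum _ fun _ hk =>
    (stronglyMeasurable_condExp.measurable.mono (𝒢.mono (by grind)) le_rfl).max
      measurable_const

theorem ae_sum_condExp_eq_predictableQuadVar :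
    ∀ᵐ ω ∂μ, ∀ n, ∑ k ∈ Icc 1 n, μ[fun ω' => (S k ω' - S (k - 1) ω') ^ 2 | 𝒢 (k - 1)] ω =
      predictableQuadVar μ 𝒢 S n ω := by
  have hnonneg : ∀ᵐ ω ∂μ, ∀ k, 0 ≤ μ[fun ω' => (S (k + 1) ω' - S k ω') ^ 2 | 𝒢 k] ω :=
    ae_all_iff.2 fun k => condExp_nonneg (.of_forall fun _ => sq_nonneg _)
  filter_upwards [hnonneg] with ω hω n
  rw [predictableQuadVar, ← Ico_add_one_right_eq_Icc, sum_Ico_eq_sum_range, Nat.add_sub_cancel]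
  refine sum_congr rfl fun k _ => ?_
  rw [add_comm 1 k, Nat.add_sub_cancel, max_eq_left (hω k)]

theorem inv_one_add_predictableQuadVar_nonneg (n : ℕ) (ω : Ω) :
    0 ≤ (1 + predictableQuadVar μ 𝒢 S n ω)⁻¹ :=
  inv_nonneg.2 (add_nonneg zero_le_one (predictableQuadVar_nonneg n ω))

theorem inv_one_add_predictableQuadVar_le_one (n : ℕ) (ω : Ω) :
    (1 + predictableQuadVar μ 𝒢 S n ω)⁻¹ ≤ 1 :=
  inv_le_one_of_one_le₀ (le_add_of_nonneg_right (predictableQuadVar_nonneg n ω))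

theorem integrable_inv_one_add_predictableQuadVar [IsFiniteMeasure μ] (n : ℕ) :
    Integrable (fun ω => (1 + predictableQuadVar μ 𝒢 S n ω)⁻¹) μ := by
  have hmeas : Measurable fun ω => (1 + predictableQuadVar μ 𝒢 S n ω)⁻¹ :=
    (((measurable_predictableQuadVar n.le_succ).mono (𝒢.le n) le_rfl).const_add 1).inv
  refine (integrable_const 1).mono' hmeas.aestronglyMeasurable (.of_forall fun ω => ?_)
  rw [Real.norm_of_nonneg (inv_one_add_predictableQuadVar_nonneg n ω)]
  exact inv_one_add_predictableQuadVar_le_one n ω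

theorem martingale_normalizedMartingale [IsFiniteMeasure μ] (hS : Martingale S 𝒢 μ) :
    Martingale (normalizedMartingale μ 𝒢 S) 𝒢 μ := by
  set ξ : ℕ → Ω → ℝ := fun n ω => (1 + predictableQuadVar μ 𝒢 S n ω)⁻¹
  have hξ : StronglyAdapted 𝒢 fun n => ξ (n + 1) := fun n =>
    ((measurable_predictableQuadVar le_rfl).const_add 1).inv.stronglyMeasurable
  have hξ_le : ∀ n ω, ξ n ω ≤ 1 := inv_one_add_predictableQuadVar_le_one
  have hξ_nonneg : ∀ n ω, 0 ≤ ξ n ω := inv_one_add_predictableQuadVar_nonneg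
  refine martingale_iff.2 ⟨?_, hS.submartingale.sum_mul_sub' hξ hξ_le hξ_nonneg⟩
  convert (hS.neg.submartingale.sum_mul_sub' hξ hξ_le hξ_nonneg).neg using 1
  funext n
  simp only [normalizedMartingale, Pi.neg_apply, ← sum_neg_distrib]
  exact sum_congr rfl fun k _ => by ring

theorem normalizedMartingale_succ_sub (n : ℕ) :
    normalizedMartingale μ 𝒢 S (n + 1) - normalizedMartingale μ 𝒢 S n =
      (fun ω => (1 + predictableQuadVar μ 𝒢 S (n + 1) ω)⁻¹) * (S (n + 1) - S n) := by
  simp only [normalizedMartingale, sum_range_succ, add_sub_cancel_left]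

theorem normalizedMartingale_apply (n : ℕ) (ω : Ω) :
    normalizedMartingale μ 𝒢 S n ω =
      ∑ k ∈ range n, (1 + predictableQuadVar μ 𝒢 S (k + 1) ω)⁻¹ * (S (k + 1) ω - S k ω) := by
  simp [normalizedMartingale, Finset.sum_apply]

theorem memLp_normalizedMartingale (hL2 : ∀ n, MemLp (S n) 2 μ) (n : ℕ) :
    MemLp (normalizedMartingale μ 𝒢 S n) 2 μ := by
  refine memLp_finsetSum' _ fun k _ => ?_
  have hξ : Measurable fun ω => (1 + predictableQuadVar μ 𝒢 S (k + 1) ω)⁻¹ :=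
    (((measurable_predictableQuadVar le_rfl).mono (𝒢.le k) le_rfl).const_add 1).inv
  refine ((hL2 (k + 1)).sub (hL2 k)).of_le
    (hξ.aestronglyMeasurable.mul ((hL2 (k + 1)).sub (hL2 k)).aestronglyMeasurable)
    (.of_forall fun ω => ?_)
  rw [Pi.mul_apply, norm_mul, Real.norm_of_nonneg (inv_one_add_predictableQuadVar_nonneg _ ω)]
  exact mul_le_of_le_one_left (norm_nonneg _) (inv_one_add_predictableQuadVar_le_one _ ω)

theorem integral_sq_normalizedMartingale_sub_le [IsFiniteMeasure μ]
    (hL2 : ∀ n, MemLp (S n) 2 μ) (n : ℕ) :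
    ∫ ω, (normalizedMartingale μ 𝒢 S (n + 1) ω - normalizedMartingale μ 𝒢 S n ω) ^ 2 ∂μ ≤
      ∫ ω, (1 + predictableQuadVar μ 𝒢 S n ω)⁻¹ ∂μ -
        ∫ ω, (1 + predictableQuadVar μ 𝒢 S (n + 1) ω)⁻¹ ∂μ := by
  set d : Ω → ℝ := fun ω => (S (n + 1) ω - S n ω) ^ 2
  set ξsq : Ω → ℝ := fun ω => (1 + predictableQuadVar μ 𝒢 S (n + 1) ω)⁻¹ ^ 2
  have hξsq : StronglyMeasurable[𝒢 n] ξsq :=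
    (((measurable_predictableQuadVar le_rfl).const_add 1).inv.pow_const 2).stronglyMeasurable
  have hd : Integrable d μ := ((hL2 (n + 1)).sub (hL2 n)).integrable_sq
  have hξsq_d : Integrable (ξsq * d) μ :=
    hd.bdd_mul (c := 1) (hξsq.mono (𝒢.le n)).aestronglyMeasurable (.of_forall fun ω => by
      rw [Real.norm_of_nonneg (sq_nonneg _)]
      exact pow_le_one₀ (inv_one_add_predictableQuadVar_nonneg _ ω)
        (inv_one_add_predictableQuadVar_le_one _ ω))
  have hsq : ∀ ω, (normalizedMartingale μ 𝒢 S (n + 1) ω - normalizedMartingale μ 𝒢 S n ω) ^ 2 =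
      ξsq ω * d ω := fun ω => by
    rw [← Pi.sub_apply, normalizedMartingale_succ_sub, Pi.mul_apply, mul_pow]
    rfl
  have hd_nonneg : ∀ᵐ ω ∂μ, 0 ≤ μ[d | 𝒢 n] ω := condExp_nonneg (.of_forall fun ω => sq_nonneg _)
  calc _ = ∫ ω, ξsq ω * d ω ∂μ := integral_congr_ae (.of_forall hsq)
    _ = ∫ ω, ξsq ω * μ[d | 𝒢 n] ω ∂μ :=
        integral_mul_eq_integral_mul_condExp (𝒢.le n) hξsq hξsq_d hd
    _ ≤ ∫ ω, ((1 + predictableQuadVar μ 𝒢 S n ω)⁻¹ -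
          (1 + predictableQuadVar μ 𝒢 S (n + 1) ω)⁻¹) ∂μ := by
        refine integral_mono_of_nonneg ?_ ?_ ?_
        · filter_upwards [hd_nonneg] with ω hω using mul_nonneg (sq_nonneg _) hω
        · exact integrable_inv_one_add_predictableQuadVar n |>.sub
            (integrable_inv_one_add_predictableQuadVar (n + 1))
        · filter_upwards [hd_nonneg] with ω hω
          simp only [ξsq, predictableQuadVar_succ, ← add_assoc]
          rw [max_eq_left hω]
          exact inv_sq_mul_le_inv_sub_inv
            (add_pos_of_pos_of_nonneg zero_lt_one (predictableQuadVar_nonneg n ω)) hω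
    _ = _ := integral_sub (integrable_inv_one_add_predictableQuadVar n)
          (integrable_inv_one_add_predictableQuadVar (n + 1))

theorem integral_sq_normalizedMartingale_add_integral_inv_le_one [IsProbabilityMeasure μ]
    (hS : Martingale S 𝒢 μ) (hL2 : ∀ n, MemLp (S n) 2 μ) (n : ℕ) :
    ∫ ω, normalizedMartingale μ 𝒢 S n ω ^ 2 ∂μ +
      ∫ ω, (1 + predictableQuadVar μ 𝒢 S n ω)⁻¹ ∂μ ≤ 1 := by
  induction n with
  | zero => simp [normalizedMartingale, predictableQuadVar]
  | succ n ih =>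
    rw [(martingale_normalizedMartingale hS).integral_sq_succ (memLp_normalizedMartingale hL2)]
    linarith [integral_sq_normalizedMartingale_sub_le (𝒢 := 𝒢) hL2 n]

theorem ae_exists_tendsto_normalizedMartingale [IsProbabilityMeasure μ]
    (hS : Martingale S 𝒢 μ) (hL2 : ∀ n, MemLp (S n) 2 μ) :
    ∀ᵐ ω ∂μ, ∃ c, Tendsto (fun n => normalizedMartingale μ 𝒢 S n ω) atTop (𝓝 c) := by
  refine (martingale_normalizedMartingale hS).submartingale.exists_ae_tendsto_of_bdd (R := 2)
    fun n => (eLpNorm_one_le_one_add_integral_sq (memLp_normalizedMartingale hL2 n)).trans ?_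
  have hinv : 0 ≤ ∫ ω, (1 + predictableQuadVar μ 𝒢 S n ω)⁻¹ ∂μ :=
    integral_nonneg (inv_one_add_predictableQuadVar_nonneg n)
  have hbound := integral_sq_normalizedMartingale_add_integral_inv_le_one hS hL2 n
  rw [show ((2 : NNReal) : ENNReal) = ENNReal.ofReal 2 by norm_num]
  exact ENNReal.ofReal_le_ofReal (by linarith)

end

theorem martingale_strong_law {Ω : Type*} {m0 : MeasurableSpace Ω}
    (μ : Measure Ω) [IsProbabilityMeasure μ]
    (𝒢 : Filtration ℕ m0)
    (S : ℕ → Ω → ℝ)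
    (hmart : Martingale S 𝒢 μ)
    (hS0 : S 0 = 0)
    (hL2 : ∀ n, MemLp (S n) 2 μ)
    (A : ℕ → Ω → ℝ)
    (hA : ∀ n, A n =ᵐ[μ] fun ω =>
      ∑ k ∈ Finset.Icc 1 n, (μ[fun ω' => (S k ω' - S (k-1) ω')^2 | 𝒢 (k-1)]) ω) :
    ∀ᵐ ω ∂μ, Tendsto (fun n => A n ω) atTop atTop →
      Tendsto (fun n => S n ω / A n ω) atTop (nhds 0) := by
  filter_upwards [ae_exists_tendsto_normalizedMartingale hmart hL2,
    ae_sum_condExp_eq_predictableQuadVar, ae_all_iff.2 hA] with ω ⟨L, hL⟩ hQV hAω hAtop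
  have hA_eq : ∀ n, A n ω = predictableQuadVar μ 𝒢 S n ω := fun n => (hAω n).trans (hQV n)
  simp only [hA_eq, normalizedMartingale_apply] at hAtop hL ⊢
  exact tendsto_div_of_tendsto_sum_inv_one_add_mul_sub (predictableQuadVar_nonneg · ω)
    (monotone_predictableQuadVar ω) hAtop (congrFun hS0 ω) hL
end
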